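/- arXiv:2511.16877 — 5 statements merged into one kernel-verified Lean document; each statement's English description precedes it below -/
import Mathlib

section
/- Let k be a positive integer, let G=(V,E) be a simple (k,2k)-sparse graph on at least three nodes, and let u,v ∈ V be two distinct nodes with no edge between them. Let D be an orientation of G in which every node has indegree at most k and the indegrees of u and v are zero. Then the graph G+uv (G with the edge uv added) is (k,2k)-sparse if and only if for every node w ∈ V∖{u,v} there exists a directed path in D ending at w that starts at some node distinct from u and v whose indegree in D is strictly smaller than k. -/
open Classical Finset


/-- `indCount H X` is the number of edges of the simple graph `H`
with both endpoints in `X`. -/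
noncomputable def indCount {V : Type*} (H : SimpleGraph V) (X : Set V) : ℕ :=
  Nat.card {e : Sym2 V // e ∈ H.edgeSet ∧ ∀ x ∈ e, x ∈ X}

/-- `H` is `(k, 2k)`-sparse: every set of at least three nodes `X`
induces at most `k|X| - 2k` edges. -/
def IsK2KSparse {V : Type*} (k : ℕ) (H : SimpleGraph V) : Prop :=
  ∀ X : Set V, 3 ≤ Nat.card X →
    (indCount H X : ℤ) ≤ k * Nat.card X - 2 * k

/-- The indegree of the node `w` in the digraph `D`. -/
noncomputable def indeg {V : Type*} (D : V → V → Prop) (w : V) : ℕ :=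
  Nat.card {x : V // D x w}

section
variable {V : Type*} [Fintype V]

lemma indeg_eq_ncard (D : V → V → Prop) (w : V) :
    indeg D w = Set.ncard {x | D x w} := rfl

lemma no_in {D : V → V → Prop} {w : V} (h : indeg D w = 0) (x : V) : ¬ D x w := by
  intro hx
  rw [indeg_eq_ncard] at h
  rw [Set.ncard_eq_zero (Set.toFinite _)] at h
  exact absurd hx (by rw [Set.eq_empty_iff_forall_notMem] at h; exact h x)

omit [Fintype V] in
lemma indCount_eq_ncard (H : SimpleGraph V) (X : Set V) :
    indCount H X = Set.ncard {e : Sym2 V | e ∈ H.edgeSet ∧ ∀ x ∈ e, x ∈ X} := rfl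

lemma indCount_eq_sum (G : SimpleGraph V) (D : V → V → Prop)
    (hD1 : ∀ x y, D x y → G.Adj x y)
    (hD2 : ∀ x y, G.Adj x y → D x y ∨ D y x)
    (hD3 : ∀ x y, D x y → ¬ D y x) (X : Set V) :
    indCount G X = ∑ t : V, Set.ncard {x | D x t ∧ x ∈ X ∧ t ∈ X} := by
  classical
  have hcount : indCount G X
      = (univ.filter fun e : Sym2 V => e ∈ G.edgeSet ∧ ∀ x ∈ e, x ∈ X).card := by
    rw [indCount, Nat.card_eq_fintype_card, Fintype.card_subtype]
  rw [hcount]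
  have key : (univ.filter fun p : V × V => D p.1 p.2 ∧ p.1 ∈ X ∧ p.2 ∈ X).card
      = (univ.filter fun e : Sym2 V => e ∈ G.edgeSet ∧ ∀ x ∈ e, x ∈ X).card := by
    apply Finset.card_bij (fun p _ => s(p.1, p.2))
    · rintro ⟨a, b⟩ hp
      simp only [mem_filter, mem_univ, true_and] at hp ⊢
      refine ⟨(SimpleGraph.mem_edgeSet G).2 (hD1 _ _ hp.1), ?_⟩
      intro x hx
      rcases Sym2.mem_iff.1 hx with rfl | rfl
      · exact hp.2.1
      · exact hp.2.2
    · rintro ⟨a, b⟩ ha ⟨c, d⟩ hc h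
      simp only [mem_filter, mem_univ, true_and] at ha hc
      rcases Sym2.eq_iff.1 h with ⟨rfl, rfl⟩ | ⟨rfl, rfl⟩
      · rfl
      · exact absurd hc.1 (hD3 _ _ ha.1)
    · intro e he
      simp only [mem_filter, mem_univ, true_and] at he
      induction e using Sym2.inductionOn with
      | hf a b =>
        have hab : G.Adj a b := (SimpleGraph.mem_edgeSet G).1 he.1
        have haX : a ∈ X := he.2 a (Sym2.mem_iff.2 (Or.inl rfl))
        have hbX : b ∈ X := he.2 b (Sym2.mem_iff.2 (Or.inr rfl))
        rcases hD2 _ _ hab with h | h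
        · exact ⟨(a, b), by simp [h, haX, hbX], rfl⟩
        · exact ⟨(b, a), by simp [h, haX, hbX], Sym2.eq_swap⟩
  rw [← key]
  rw [Finset.card_eq_sum_card_fiberwise (t := (univ : Finset V))
    (f := fun p : V × V => p.2) (fun p _ => mem_univ _)]
  apply Finset.sum_congr rfl
  intro t _
  have : Set.ncard {x | D x t ∧ x ∈ X ∧ t ∈ X}
      = (univ.filter fun x => D x t ∧ x ∈ X ∧ t ∈ X).card := by
    rw [Set.ncard_eq_toFinset_card', Set.toFinset_setOf]
  rw [this]
  apply Finset.card_bij (fun p _ => p.1)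
  · rintro ⟨a, b⟩ hp
    simp only [mem_filter, mem_univ, true_and] at hp ⊢
    obtain ⟨⟨h1, h2, h3⟩, rfl⟩ := hp
    exact ⟨h1, h2, h3⟩
  · rintro ⟨a, b⟩ ha ⟨c, d⟩ hc h
    simp only [mem_filter, mem_univ, true_and] at ha hc
    obtain ⟨-, rfl⟩ := ha
    obtain ⟨-, rfl⟩ := hc
    simpa using h
  · intro x hx
    simp only [mem_filter, mem_univ, true_and] at hx
    exact ⟨(x, t), by simp [hx.1, hx.2.1, hx.2.2], rfl⟩

lemma indCount_sup (G : SimpleGraph V) {u v : V} (huv : u ≠ v) (hadj : ¬ G.Adj u v)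
    (X : Set V) (hX : u ∈ X ∧ v ∈ X) :
    indCount (G ⊔ SimpleGraph.fromEdgeSet {s(u, v)}) X = indCount G X + 1 := by
  rw [indCount_eq_ncard, indCount_eq_ncard]
  have hmem : ∀ e : Sym2 V, e ∈ (G ⊔ SimpleGraph.fromEdgeSet {s(u, v)}).edgeSet
      ↔ (e ∈ G.edgeSet ∨ e = s(u, v)) := by
    intro e
    rw [SimpleGraph.edgeSet_sup, SimpleGraph.edgeSet_fromEdgeSet]
    constructor
    · rintro (h | ⟨h, -⟩)
      · exact Or.inl h
      · exact Or.inr h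
    · rintro (h | rfl)
      · exact Or.inl h
      · exact Or.inr ⟨rfl, by simp [Sym2.isDiag_iff_proj_eq, huv]⟩
  have hone : {e : Sym2 V | e = s(u, v) ∧ ∀ x ∈ e, x ∈ X} = {s(u, v)} := by
    ext e
    simp only [Set.mem_setOf_eq, Set.mem_singleton_iff]
    constructor
    · rintro ⟨rfl, -⟩; rfl
    · rintro rfl
      refine ⟨rfl, fun x hx => ?_⟩
      rcases Sym2.mem_iff.1 hx with rfl | rfl
      · exact hX.1
      · exact hX.2
  have hset : {e : Sym2 V | e ∈ (G ⊔ SimpleGraph.fromEdgeSet {s(u, v)}).edgeSet ∧ ∀ x ∈ e, x ∈ X}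
      = {e : Sym2 V | e ∈ G.edgeSet ∧ ∀ x ∈ e, x ∈ X}
        ∪ {e : Sym2 V | e = s(u, v) ∧ ∀ x ∈ e, x ∈ X} := by
    ext e
    simp only [Set.mem_setOf_eq, Set.mem_union, hmem e]
    tauto
  have hdisj : Disjoint {e : Sym2 V | e ∈ G.edgeSet ∧ ∀ x ∈ e, x ∈ X}
      {e : Sym2 V | e = s(u, v) ∧ ∀ x ∈ e, x ∈ X} := by
    rw [Set.disjoint_left]
    rintro e he1 ⟨rfl, -⟩
    exact hadj ((SimpleGraph.mem_edgeSet G).1 he1.1)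
  rw [hset, Set.ncard_union_eq hdisj (Set.toFinite _) (Set.toFinite _), hone,
    Set.ncard_singleton]

lemma indCount_sup' (G : SimpleGraph V) {u v : V} (huv : u ≠ v) (hadj : ¬ G.Adj u v)
    (X : Set V) (hX : ¬ (u ∈ X ∧ v ∈ X)) :
    indCount (G ⊔ SimpleGraph.fromEdgeSet {s(u, v)}) X = indCount G X := by
  rw [indCount_eq_ncard, indCount_eq_ncard]
  congr 1
  ext e
  simp only [Set.mem_setOf_eq, SimpleGraph.edgeSet_sup, SimpleGraph.edgeSet_fromEdgeSet,
    Set.mem_union, Set.mem_diff, Set.mem_singleton_iff]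
  constructor
  · rintro ⟨h | ⟨rfl, -⟩, hQ⟩
    · exact ⟨h, hQ⟩
    · exact absurd ⟨hQ u (Sym2.mem_iff.2 (Or.inl rfl)), hQ v (Sym2.mem_iff.2 (Or.inr rfl))⟩ hX
  · rintro ⟨h, hQ⟩
    exact ⟨Or.inl h, hQ⟩

lemma all_eq_of_sum {α : Type*} {s : Finset α} {f : α → ℕ} {k : ℕ}
    (hle : ∀ i ∈ s, f i ≤ k) (hs : ∑ i ∈ s, f i = k * s.card) :
    ∀ i ∈ s, f i = k := by
  by_contra hcon
  push_neg at hcon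
  obtain ⟨i, hi, hne⟩ := hcon
  have hlt : ∑ i ∈ s, f i < ∑ _i ∈ s, k :=
    Finset.sum_lt_sum hle ⟨i, hi, lt_of_le_of_ne (hle i hi) hne⟩
  rw [Finset.sum_const, smul_eq_mul, mul_comm] at hlt
  omega

lemma dX_le_indeg (D : V → V → Prop) (t : V) (X : Set V) :
    Set.ncard {x | D x t ∧ x ∈ X ∧ t ∈ X} ≤ indeg D t := by
  rw [indeg_eq_ncard]
  exact Set.ncard_le_ncard (fun x hx => hx.1) (Set.toFinite _)
end


theorem stmt0 {V : Type*} [Fintype V] (k : ℕ) (hk : 0 < k)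
    (G : SimpleGraph V) (hV : 3 ≤ Fintype.card V) (hG : IsK2KSparse k G)
    (u v : V) (huv : u ≠ v) (hadj : ¬ G.Adj u v)
    -- `D` is an orientation of `G`:
    (D : V → V → Prop)
    (hD1 : ∀ x y, D x y → G.Adj x y)
    (hD2 : ∀ x y, G.Adj x y → D x y ∨ D y x)
    (hD3 : ∀ x y, D x y → ¬ D y x)
    -- all indegrees are at most `k`, and the indegrees of `u` and `v` are zero:
    (hdeg : ∀ w, indeg D w ≤ k)
    (hu : indeg D u = 0) (hv : indeg D v = 0) :
    IsK2KSparse k (G ⊔ SimpleGraph.fromEdgeSet {s(u, v)}) ↔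
      ∀ w : V, w ≠ u → w ≠ v →
        ∃ s : V, s ≠ u ∧ s ≠ v ∧ indeg D s < k ∧ Relation.ReflTransGen D s w := by
  classical
  constructor
  · -- sparsity of G+uv implies reachability
    intro hsp w hwu hwv
    by_contra hcon
    push_neg at hcon
    have hall : ∀ t, Relation.ReflTransGen D t w → t ≠ u → t ≠ v → indeg D t = k := by
      intro t ht h1 h2
      by_contra h
      exact hcon t h1 h2 (lt_of_le_of_ne (hdeg t) h) ht
    set X : Set V := {t | Relation.ReflTransGen D t w} ∪ {u, v} with hXdef
    have huX : u ∈ X := Or.inr (Or.inl rfl)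
    have hvX : v ∈ X := Or.inr (Or.inr rfl)
    have hwX : w ∈ X := Or.inl Relation.ReflTransGen.refl
    have huv' : ({u, v} : Finset V) ⊆ X.toFinset := by
      intro x hx
      rcases Finset.mem_insert.1 hx with rfl | hx
      · exact Set.mem_toFinset.2 huX
      · rw [Finset.mem_singleton] at hx
        subst hx
        exact Set.mem_toFinset.2 hvX
    set S : Finset V := X.toFinset \ {u, v} with hSdef
    have hcard2 : ({u, v} : Finset V).card = 2 := by
      rw [Finset.card_insert_of_notMem (by simp [huv]), Finset.card_singleton]
    have hScard : S.card = X.toFinset.card - 2 := by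
      rw [hSdef, Finset.card_sdiff_of_subset huv', hcard2]
    have hn3 : 3 ≤ X.toFinset.card := by
      have h1 : ({w, u, v} : Finset V) ⊆ X.toFinset := by
        intro x hx
        simp only [Finset.mem_insert, Finset.mem_singleton] at hx
        rcases hx with rfl | rfl | rfl
        · exact Set.mem_toFinset.2 hwX
        · exact Set.mem_toFinset.2 huX
        · exact Set.mem_toFinset.2 hvX
      have h2 : ({w, u, v} : Finset V).card = 3 := by
        rw [Finset.card_insert_of_notMem (by simp [hwu, hwv]),
          Finset.card_insert_of_notMem (by simp [huv]), Finset.card_singleton]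
      calc 3 = ({w, u, v} : Finset V).card := h2.symm
        _ ≤ X.toFinset.card := Finset.card_le_card h1
    have hSk : ∀ t ∈ S, Set.ncard {x | D x t ∧ x ∈ X ∧ t ∈ X} = k := by
      intro t ht
      rw [hSdef, Finset.mem_sdiff] at ht
      obtain ⟨htX', htuv⟩ := ht
      have htX : t ∈ X := Set.mem_toFinset.1 htX'
      simp only [Finset.mem_insert, Finset.mem_singleton, not_or] at htuv
      obtain ⟨htu, htv⟩ := htuv
      have htT : Relation.ReflTransGen D t w := by
        rcases htX with h | h
        · exact h
        · rcases h with rfl | rfl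
          · exact absurd rfl htu
          · exact absurd rfl htv
      have hfull : {x | D x t ∧ x ∈ X ∧ t ∈ X} = {x | D x t} := by
        ext x
        simp only [Set.mem_setOf_eq]
        exact ⟨fun h => h.1,
          fun h => ⟨h, Or.inl (Relation.ReflTransGen.head h htT), htX⟩⟩
      rw [hfull, ← indeg_eq_ncard]
      exact hall t htT htu htv
    have hsum : k * (X.toFinset.card - 2) ≤ indCount G X := by
      rw [indCount_eq_sum G D hD1 hD2 hD3 X]
      calc k * (X.toFinset.card - 2) = ∑ _t ∈ S, k := by
            rw [Finset.sum_const, smul_eq_mul, hScard, mul_comm]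
        _ = ∑ t ∈ S, Set.ncard {x | D x t ∧ x ∈ X ∧ t ∈ X} :=
            (Finset.sum_congr rfl hSk).symm
        _ ≤ ∑ t : V, Set.ncard {x | D x t ∧ x ∈ X ∧ t ∈ X} :=
            Finset.sum_le_sum_of_subset (Finset.subset_univ S)
    have hncard : Nat.card X = X.toFinset.card := by
      rw [Nat.card_eq_fintype_card, Set.toFinset_card]
    have hsp' := hsp X (by rw [hncard]; exact hn3)
    rw [indCount_sup G huv hadj X ⟨huX, hvX⟩, hncard] at hsp'
    have h2n : 2 ≤ X.toFinset.card := by omega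
    have hc2 : ((k * (X.toFinset.card - 2) : ℕ) : ℤ) ≤ (indCount G X : ℤ) :=
      Nat.cast_le.2 hsum
    rw [Nat.cast_mul, Nat.cast_sub h2n] at hc2
    push_cast at hsp' hc2
    linarith
  · -- reachability implies sparsity of G+uv
    intro hpath X h3
    by_cases hXuv : u ∈ X ∧ v ∈ X
    · rw [indCount_sup G huv hadj X hXuv]
      have hGX := hG X h3
      have hne : (indCount G X : ℤ) ≠ (k : ℤ) * Nat.card X - 2 * k := by
        intro heq
        have hncard : Nat.card X = X.toFinset.card := by
          rw [Nat.card_eq_fintype_card, Set.toFinset_card]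
        have hn3 : 3 ≤ X.toFinset.card := by rw [← hncard]; exact h3
        have h2n : 2 ≤ X.toFinset.card := by omega
        have hNat : indCount G X = k * (X.toFinset.card - 2) := by
          have hcast : ((k * (X.toFinset.card - 2) : ℕ) : ℤ)
              = (k : ℤ) * X.toFinset.card - 2 * k := by
            rw [Nat.cast_mul, Nat.cast_sub h2n]
            push_cast
            ring
          rw [hncard] at heq
          exact_mod_cast heq.trans hcast.symm
        rw [indCount_eq_sum G D hD1 hD2 hD3 X] at hNat
        set S : Finset V := X.toFinset \ {u, v} with hSdef
        have huv' : ({u, v} : Finset V) ⊆ X.toFinset := by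
          intro x hx
          rcases Finset.mem_insert.1 hx with rfl | hx
          · exact Set.mem_toFinset.2 hXuv.1
          · rw [Finset.mem_singleton] at hx
            subst hx
            exact Set.mem_toFinset.2 hXuv.2
        have hcard2 : ({u, v} : Finset V).card = 2 := by
          rw [Finset.card_insert_of_notMem (by simp [huv]), Finset.card_singleton]
        have hScard : S.card = X.toFinset.card - 2 := by
          rw [hSdef, Finset.card_sdiff_of_subset huv', hcard2]
        have hzero : ∀ t ∈ (univ : Finset V), t ∉ S →
            Set.ncard {x | D x t ∧ x ∈ X ∧ t ∈ X} = 0 := by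
          intro t _ htS
          rw [hSdef, Finset.mem_sdiff, not_and_or, not_not] at htS
          have hempty : {x | D x t ∧ x ∈ X ∧ t ∈ X} = ∅ := by
            ext x
            simp only [Set.mem_setOf_eq, Set.mem_empty_iff_false, iff_false]
            rintro ⟨h1, _, h3⟩
            rcases htS with h | h
            · exact h (Set.mem_toFinset.2 h3)
            · simp only [Finset.mem_insert, Finset.mem_singleton] at h
              rcases h with rfl | rfl
              · exact no_in hu x h1
              · exact no_in hv x h1
          rw [hempty, Set.ncard_empty]
        have hsumS : ∑ t ∈ S, Set.ncard {x | D x t ∧ x ∈ X ∧ t ∈ X} = k * S.card := by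
          rw [Finset.sum_subset (Finset.subset_univ S) hzero, hNat, hScard]
        have hallk : ∀ t ∈ S, Set.ncard {x | D x t ∧ x ∈ X ∧ t ∈ X} = k :=
          all_eq_of_sum (fun t _ => le_trans (dX_le_indeg D t X) (hdeg t)) hsumS
        have hclosed : ∀ t ∈ S, ∀ x, D x t → x ∈ X := by
          intro t ht x hx
          have hsub : {x | D x t ∧ x ∈ X ∧ t ∈ X} ⊆ {x | D x t} := fun y hy => hy.1
          have hle : Set.ncard {x | D x t} ≤ Set.ncard {x | D x t ∧ x ∈ X ∧ t ∈ X} := by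
            rw [hallk t ht, ← indeg_eq_ncard]
            exact hdeg t
          have heqs := Set.eq_of_subset_of_ncard_le hsub hle (Set.toFinite _)
          have : x ∈ {x | D x t} := hx
          rw [← heqs] at this
          exact this.2.1
        have hSne : S.Nonempty := by
          rw [← Finset.card_pos, hScard]
          omega
        obtain ⟨w, hwS⟩ := hSne
        have hwmem := Finset.mem_sdiff.1 hwS
        simp only [Finset.mem_insert, Finset.mem_singleton, not_or] at hwmem
        obtain ⟨hwX, hwu, hwv⟩ := hwmem
        obtain ⟨s, hsu, hsv, hslt, hsw⟩ := hpath w hwu hwv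
        have hreach : ∀ a, Relation.ReflTransGen D a w → a ∈ X := by
          intro a ha
          induction ha using Relation.ReflTransGen.head_induction_on with
          | refl => exact Set.mem_toFinset.1 hwX
          | head h' h ih =>
            rename_i a c
            have hcu : c ≠ u := fun e => no_in hu a (e ▸ h')
            have hcv : c ≠ v := fun e => no_in hv a (e ▸ h')
            have hcS : c ∈ S := by
              rw [hSdef, Finset.mem_sdiff]
              exact ⟨Set.mem_toFinset.2 ih, by simp [hcu, hcv]⟩
            exact hclosed c hcS a h'
        have hsX : s ∈ X := hreach s hsw
        have hsS : s ∈ S := by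
          rw [hSdef, Finset.mem_sdiff]
          exact ⟨Set.mem_toFinset.2 hsX, by simp [hsu, hsv]⟩
        have h1 := hallk s hsS
        have h2 := dX_le_indeg D s X
        omega
      have hlt := lt_of_le_of_ne hGX hne
      push_cast
      linarith [Int.add_one_le_iff.mpr hlt]
    · rw [indCount_sup' G huv hadj X hXuv]
      exact hG X h3
end

section
/- Let k be a positive integer, let G=(V,E) be a simple (k,2k)-sparse graph on at least three nodes, and let u,v ∈ V be two distinct nonadjacent nodes. Let D be an orientation of G in which every node has indegree at most k and the indegrees of u and v are zero. Suppose that for every node w ∈ V∖{u,v} there is a directed path in D to w from some node distinct from u and v with indegree smaller than k. Then for every subset X ⊆ V with u,v ∈ X and |X| ≥ 3 one has i_G(X) < k|X| − 2k; consequently, G+uv is (k,2k)-sparse. -/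
/-!
Count every edge induced by a node set `X ∋ u, v` at its head in `D`: each node of `X` receives at
most `k` of them, and `u`, `v` receive none, so `i_G(X) ≤ k(|X| - 2)`. Equality would need every
other node of `X` to receive `k` arcs from inside `X`. But following a directed path from a
deficient source to a node of `X ∖ {u, v}` either starts inside `X`, so the source is a node of
`X` with fewer than `k` arcs from `X`, or it enters `X` along an arc from outside, and the head of
that arc has fewer than `k` arcs from `X`.
-/

open Finset

theorem Relation.ReflTransGen.mem_of_forall_rel_mem {V : Type*} {D : V → V → Prop} {X : Set V}
    (hX : ∀ a b, D a b → b ∈ X → a ∈ X) {s w : V} (h : Relation.ReflTransGen D s w)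
    (hw : w ∈ X) : s ∈ X := by
  induction h with
  | refl => exact hw
  | tail _ hbc ih => exact ih (hX _ _ hbc hw)

section

open Classical

variable {V : Type*} [Fintype V]

theorem indCount_eq_card_filter (H : SimpleGraph V) (X : Set V) :
    indCount H X = #{e : Sym2 V | e ∈ H.edgeSet ∧ ∀ x ∈ e, x ∈ X} := by
  rw [indCount, Nat.card_eq_fintype_card, Fintype.card_subtype]

theorem indeg_eq_card_filter (D : V → V → Prop) (w : V) : indeg D w = #{x | D x w} := by
  rw [indeg, Nat.card_eq_fintype_card, Fintype.card_subtype]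

theorem not_rel_of_indeg_eq_zero {D : V → V → Prop} {w : V} (hw : indeg D w = 0) (x : V) :
    ¬ D x w := by
  intro h
  have : Nonempty {x : V // D x w} := ⟨⟨x, h⟩⟩
  exact Nat.card_pos.ne' hw

theorem card_filter_rel_le_indeg (D : V → V → Prop) (T : Finset V) (b : V) :
    #{a ∈ T | D a b} ≤ indeg D b := by
  rw [indeg_eq_card_filter]
  exact card_le_card (filter_subset_filter _ (subset_univ T))

theorem card_filter_rel_lt_indeg {D : V → V → Prop} {T : Finset V} {a b : V} (hab : D a b)
    (ha : a ∉ T) : #{x ∈ T | D x b} < indeg D b := by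
  rw [indeg_eq_card_filter]
  refine card_lt_card ((ssubset_iff_of_subset (filter_subset_filter _ (subset_univ T))).2 ?_)
  exact ⟨a, mem_filter.2 ⟨mem_univ a, hab⟩, fun h => ha (mem_filter.1 h).1⟩

theorem indCount_le_sum_card_filter_rel {G : SimpleGraph V} {D : V → V → Prop}
    (hD : ∀ x y, G.Adj x y → D x y ∨ D y x) (T : Finset V) :
    indCount G T ≤ ∑ b ∈ T, #{a ∈ T | D a b} := by
  rw [indCount_eq_card_filter]
  calc _ ≤ #(T.biUnion fun b => {a ∈ T | D a b}.image fun a => s(a, b)) := by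
        refine card_le_card fun e he => ?_
        induction e with
        | _ x y =>
          simp only [mem_filter, mem_univ, true_and, SimpleGraph.mem_edgeSet, Sym2.mem_iff,
            forall_eq_or_imp, forall_eq, mem_coe] at he
          obtain ⟨hxy, hx, hy⟩ := he
          simp only [mem_biUnion, mem_image, mem_filter]
          rcases hD x y hxy with h | h
          · exact ⟨y, hy, x, ⟨hx, h⟩, rfl⟩
          · exact ⟨x, hx, y, ⟨hy, h⟩, Sym2.eq_swap⟩
    _ ≤ ∑ b ∈ T, #({a ∈ T | D a b}.image fun a => s(a, b)) := card_biUnion_le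
    _ ≤ ∑ b ∈ T, #{a ∈ T | D a b} := sum_le_sum fun b _ => card_image_le

variable {D : V → V → Prop} {k : ℕ} {u v : V}

theorem exists_card_filter_rel_lt (hdeg : ∀ w, indeg D w ≤ k)
    (hu : indeg D u = 0) (hv : indeg D v = 0)
    (hreach : ∀ w : V, w ≠ u → w ≠ v →
      ∃ s : V, s ≠ u ∧ s ≠ v ∧ indeg D s < k ∧ Relation.ReflTransGen D s w)
    {T : Finset V} {w : V} (hwT : w ∈ T) (hwu : w ≠ u) (hwv : w ≠ v) :
    ∃ b ∈ T, b ≠ u ∧ b ≠ v ∧ #{a ∈ T | D a b} < k := by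
  obtain ⟨s, hsu, hsv, hsk, hsw⟩ := hreach w hwu hwv
  by_cases hclosed : ∀ a b, D a b → b ∈ (T : Set V) → a ∈ (T : Set V)
  · exact ⟨s, hsw.mem_of_forall_rel_mem hclosed hwT, hsu, hsv,
      (card_filter_rel_le_indeg D T s).trans_lt hsk⟩
  · push Not at hclosed
    obtain ⟨a, b, hab, hbT, haT⟩ := hclosed
    refine ⟨b, hbT, ?_, ?_, (card_filter_rel_lt_indeg hab haT).trans_le (hdeg b)⟩
    · rintro rfl; exact not_rel_of_indeg_eq_zero hu a hab
    · rintro rfl; exact not_rel_of_indeg_eq_zero hv a hab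

theorem indCount_add_one_le {G : SimpleGraph V} (hD : ∀ x y, G.Adj x y → D x y ∨ D y x)
    (hdeg : ∀ w, indeg D w ≤ k) (hu : indeg D u = 0) (hv : indeg D v = 0)
    {T : Finset V} (hb : ∃ b ∈ T, b ≠ u ∧ b ≠ v ∧ #{a ∈ T | D a b} < k) :
    indCount G T + 1 ≤ k * #(T \ {u, v}) := by
  obtain ⟨b, hbT, hbu, hbv, hbk⟩ := hb
  have hzero : ∀ x ∈ T, x ∉ T \ {u, v} → #{a ∈ T | D a x} = 0 := by
    intro x hxT hx
    rw [card_eq_zero, filter_eq_empty_iff]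
    obtain rfl | rfl : x = u ∨ x = v := by simpa [hxT, or_iff_not_imp_left] using hx
    exacts [fun a _ => not_rel_of_indeg_eq_zero hu a, fun a _ => not_rel_of_indeg_eq_zero hv a]
  calc indCount G T + 1 ≤ ∑ x ∈ T, #{a ∈ T | D a x} + 1 :=
        Nat.add_le_add_right (indCount_le_sum_card_filter_rel hD T) 1
    _ = ∑ x ∈ T \ {u, v}, #{a ∈ T | D a x} + 1 := by
        rw [sum_subset sdiff_subset hzero]
    _ ≤ ∑ x ∈ T \ {u, v}, k :=
        sum_lt_sum (fun x _ => (card_filter_rel_le_indeg D T x).trans (hdeg x))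
          ⟨b, by simp [hbT, hbu, hbv], hbk⟩
    _ = k * #(T \ {u, v}) := by rw [sum_const, smul_eq_mul, mul_comm]

theorem indCount_sup_edge_le (G : SimpleGraph V) (e : Sym2 V) (X : Set V) :
    indCount (G ⊔ SimpleGraph.fromEdgeSet {e}) X ≤ indCount G X + 1 := by
  rw [indCount_eq_card_filter, indCount_eq_card_filter]
  refine (card_le_card fun e' he' => ?_).trans (card_insert_le e _)
  simp only [mem_filter, mem_univ, true_and, SimpleGraph.edgeSet_sup,
    SimpleGraph.edgeSet_fromEdgeSet, Set.mem_union, Set.mem_sdiff, Set.mem_singleton_iff] at he'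
  rcases he' with ⟨he' | ⟨rfl, -⟩, hX⟩
  · exact mem_insert_of_mem (mem_filter.2 ⟨mem_univ _, he', hX⟩)
  · exact mem_insert_self _ _

theorem indCount_sup_edge_le_of_not_mem (G : SimpleGraph V) {e : Sym2 V} {X : Set V} {x : V}
    (hxe : x ∈ e) (hxX : x ∉ X) :
    indCount (G ⊔ SimpleGraph.fromEdgeSet {e}) X ≤ indCount G X := by
  rw [indCount_eq_card_filter, indCount_eq_card_filter]
  refine card_le_card fun e' he' => ?_
  simp only [mem_filter, mem_univ, true_and, SimpleGraph.edgeSet_sup,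
    SimpleGraph.edgeSet_fromEdgeSet, Set.mem_union, Set.mem_sdiff, Set.mem_singleton_iff] at he' ⊢
  rcases he' with ⟨he' | ⟨rfl, -⟩, hX⟩
  · exact ⟨he', hX⟩
  · exact absurd (hX x hxe) hxX

theorem isK2KSparse_sup_edge {G : SimpleGraph V} (hG : IsK2KSparse k G)
    (h : ∀ X : Set V, u ∈ X → v ∈ X → 3 ≤ Nat.card X →
      (indCount G X : ℤ) < k * Nat.card X - 2 * k) :
    IsK2KSparse k (G ⊔ SimpleGraph.fromEdgeSet {s(u, v)}) := by
  intro X hX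
  by_cases huX : u ∈ X
  · by_cases hvX : v ∈ X
    · have hadd := indCount_sup_edge_le G s(u, v) X
      have hlt := h X huX hvX hX
      omega
    · have := indCount_sup_edge_le_of_not_mem G (Sym2.mem_mk_right u v) hvX
      exact le_trans (by exact_mod_cast this) (hG X hX)
  · have := indCount_sup_edge_le_of_not_mem G (Sym2.mem_mk_left u v) huX
    exact le_trans (by exact_mod_cast this) (hG X hX)

end

theorem stmt1_general {V : Type*} [Fintype V] (k : ℕ)
    (G : SimpleGraph V) (hG : IsK2KSparse k G)
    (u v : V) (huv : u ≠ v)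
    -- `D` is an orientation of `G`:
    (D : V → V → Prop)
    (hD2 : ∀ x y, G.Adj x y → D x y ∨ D y x)
    -- all indegrees are at most `k`, and the indegrees of `u` and `v` are zero:
    (hdeg : ∀ w, indeg D w ≤ k)
    (hu : indeg D u = 0) (hv : indeg D v = 0)
    -- every node other than `u, v` is reachable from a node distinct from
    -- `u, v` whose indegree is smaller than `k`:
    (hreach : ∀ w : V, w ≠ u → w ≠ v →
      ∃ s : V, s ≠ u ∧ s ≠ v ∧ indeg D s < k ∧ Relation.ReflTransGen D s w) :
    (∀ X : Set V, u ∈ X → v ∈ X → 3 ≤ Nat.card X →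
        (indCount G X : ℤ) < k * Nat.card X - 2 * k) ∧
      IsK2KSparse k (G ⊔ SimpleGraph.fromEdgeSet {s(u, v)}) := by
  classical
  have key : ∀ X : Set V, u ∈ X → v ∈ X → 3 ≤ Nat.card X →
      (indCount G X : ℤ) < k * Nat.card X - 2 * k := by
    intro X huX hvX hX
    obtain ⟨T, rfl⟩ := X.toFinite.exists_finset_coe
    rw [Nat.card_coe_set_eq, Set.ncard_coe_finset] at hX ⊢
    have hpair : ({u, v} : Finset V) ⊆ T := insert_subset_iff.2 ⟨huX, singleton_subset_iff.2 hvX⟩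
    have hcard : #(T \ {u, v}) + 2 = #T := by
      rw [card_sdiff_of_subset hpair, card_pair huv]; omega
    obtain ⟨w, hw⟩ : (T \ {u, v}).Nonempty := by rw [← card_pos]; omega
    obtain ⟨hwT, hwu, hwv⟩ : w ∈ T ∧ w ≠ u ∧ w ≠ v := by simpa using hw
    have hcount := indCount_add_one_le hD2 hdeg hu hv
      (exists_card_filter_rel_lt hdeg hu hv hreach hwT hwu hwv)
    rw [← hcard]
    push_cast
    linarith
  exact ⟨key, isK2KSparse_sup_edge hG key⟩

theorem stmt1 {V : Type*} [Fintype V] (k : ℕ) (hk : 0 < k)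
    (G : SimpleGraph V) (hV : 3 ≤ Fintype.card V) (hG : IsK2KSparse k G)
    (u v : V) (huv : u ≠ v) (hadj : ¬ G.Adj u v)
    -- `D` is an orientation of `G`:
    (D : V → V → Prop)
    (hD1 : ∀ x y, D x y → G.Adj x y)
    (hD2 : ∀ x y, G.Adj x y → D x y ∨ D y x)
    (hD3 : ∀ x y, D x y → ¬ D y x)
    -- all indegrees are at most `k`, and the indegrees of `u` and `v` are zero:
    (hdeg : ∀ w, indeg D w ≤ k)
    (hu : indeg D u = 0) (hv : indeg D v = 0)
    -- every node other than `u, v` is reachable from a node distinct from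
    -- `u, v` whose indegree is smaller than `k`:
    (hreach : ∀ w : V, w ≠ u → w ≠ v →
      ∃ s : V, s ≠ u ∧ s ≠ v ∧ indeg D s < k ∧ Relation.ReflTransGen D s w) :
    (∀ X : Set V, u ∈ X → v ∈ X → 3 ≤ Nat.card X →
        (indCount G X : ℤ) < k * Nat.card X - 2 * k) ∧
      IsK2KSparse k (G ⊔ SimpleGraph.fromEdgeSet {s(u, v)}) :=
  stmt1_general k G hG u v huv D hD2 hdeg hu hv hreach
end

section
/- Let k be a positive integer, let G=(V,E) be a simple graph, and let u,v ∈ V be two distinct nonadjacent nodes. Let D be an orientation of G in which every node has indegree at most k and the indegrees of u and v are zero. Suppose there exists a node w ∈ V∖{u,v} such that no directed path in D ends at w starting from a node distinct from u and v with indegree smaller than k. Let R denote the set of all nodes from which w is reachable by a directed path in D (including w itself). Then every node of R∖{u,v} has indegree exactly k in D, and the set X = R ∪ {u,v} satisfies i_G(X) = k|X| − 2k. In particular, G+uv is not (k,2k)-sparse. -/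
theorem stmt2 {V : Type*} [Fintype V] (k : ℕ) (hk : 0 < k)
    (G : SimpleGraph V)
    (u v : V) (huv : u ≠ v) (hadj : ¬ G.Adj u v)
    -- `D` is an orientation of `G`:
    (D : V → V → Prop)
    (hD1 : ∀ x y, D x y → G.Adj x y)
    (hD2 : ∀ x y, G.Adj x y → D x y ∨ D y x)
    (hD3 : ∀ x y, D x y → ¬ D y x)
    -- all indegrees are at most `k`, and the indegrees of `u` and `v` are zero:
    (hdeg : ∀ w, indeg D w ≤ k)
    (hu : indeg D u = 0) (hv : indeg D v = 0)
    -- `w` is a node not reachable from any node distinct from `u, v`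
    -- with indegree smaller than `k`:
    (w : V) (hwu : w ≠ u) (hwv : w ≠ v)
    (hnoreach : ¬ ∃ s : V, s ≠ u ∧ s ≠ v ∧ indeg D s < k ∧
      Relation.ReflTransGen D s w) :
    -- `R = {x | x can reach w}`, `X = R ∪ {u, v}`:
    (∀ x : V, Relation.ReflTransGen D x w → x ≠ u → x ≠ v → indeg D x = k) ∧
    (indCount G ({x : V | Relation.ReflTransGen D x w} ∪ {u, v}) : ℤ) =
      k * Nat.card ({x : V | Relation.ReflTransGen D x w} ∪ {u, v} : Set V)
        - 2 * k ∧
    ¬ IsK2KSparse k (G ⊔ SimpleGraph.fromEdgeSet {s(u, v)}) := by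
  classical
  set R : Set V := {x : V | Relation.ReflTransGen D x w} with hRdef
  set X : Set V := R ∪ {u, v} with hXdef
  -- no arcs into a node of indegree zero
  have noIn : ∀ b : V, indeg D b = 0 → ∀ a : V, ¬ D a b := by
    intro b hb a hab
    have h0 : Nat.card {x : V // D x b} = 0 := hb
    rcases Nat.card_eq_zero.mp h0 with h | h
    · exact h.elim ⟨a, hab⟩
    · exact absurd h (not_infinite_iff_finite.mpr inferInstance)
  -- part 1
  have h1 : ∀ x : V, Relation.ReflTransGen D x w → x ≠ u → x ≠ v → indeg D x = k := by
    intro x hx hxu hxv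
    refine le_antisymm (hdeg x) ?_
    by_contra h
    push_neg at h
    exact hnoreach ⟨x, hxu, hxv, h, hx⟩
  have huX : u ∈ X := Or.inr (by simp)
  have hvX : v ∈ X := Or.inr (by simp)
  have hwX : w ∈ X := Or.inl Relation.ReflTransGen.refl
  -- X is closed under taking tails of arcs with head in X
  have hclosed : ∀ a b : V, D a b → b ∈ X → a ∈ X := by
    intro a b hab hb
    rcases hb with hbR | hbuv
    · exact Or.inl (Relation.ReflTransGen.head hab hbR)
    · simp only [Set.mem_insert_iff, Set.mem_singleton_iff] at hbuv
      rcases hbuv with h | h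
      · rw [h] at hab; exact absurd hab (noIn u hu a)
      · rw [h] at hab; exact absurd hab (noIn v hv a)
  -- edges inside X correspond to arcs with head in X
  have card1 : Nat.card {e : Sym2 V // e ∈ G.edgeSet ∧ ∀ x ∈ e, x ∈ X}
      = Nat.card {p : V × V // D p.1 p.2 ∧ p.2 ∈ X} := by
    let f : {p : V × V // D p.1 p.2 ∧ p.2 ∈ X} →
        {e : Sym2 V // e ∈ G.edgeSet ∧ ∀ x ∈ e, x ∈ X} :=
      fun p => ⟨s(p.1.1, p.1.2), G.mem_edgeSet.mpr (hD1 _ _ p.2.1),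
        by
          intro x hx
          rcases Sym2.mem_iff.mp hx with rfl | rfl
          · exact hclosed _ _ p.2.1 p.2.2
          · exact p.2.2⟩
    have hfbij : Function.Bijective f := by
      constructor
      · rintro ⟨⟨a, b⟩, hab, hbX⟩ ⟨⟨c, d⟩, hcd, hdX⟩ hfe
        simp only [f, Subtype.mk.injEq] at hfe
        rcases Sym2.eq_iff.mp hfe with ⟨rfl, rfl⟩ | ⟨rfl, rfl⟩
        · rfl
        · exact absurd hab (hD3 _ _ hcd)
      · rintro ⟨e, he, heX⟩
        induction e using Sym2.ind with
        | _ a b =>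
          have hab : G.Adj a b := G.mem_edgeSet.mp he
          rcases hD2 _ _ hab with h | h
          · exact ⟨⟨(a, b), h, heX b (by simp)⟩, rfl⟩
          · refine ⟨⟨(b, a), h, heX a (by simp)⟩, ?_⟩
            simp only [f, Subtype.mk.injEq]
            exact Sym2.eq_swap
    exact (Nat.card_congr (Equiv.ofBijective f hfbij)).symm
  -- arcs with head in X, counted by head
  have card2 : Nat.card {p : V × V // D p.1 p.2 ∧ p.2 ∈ X}
      = ∑ b ∈ X.toFinset, indeg D b := by
    have e2 : {p : V × V // D p.1 p.2 ∧ p.2 ∈ X} ≃ (Σ b : X, {a : V // D a (b : V)}) :=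
      { toFun := fun p => ⟨⟨p.1.2, p.2.2⟩, ⟨p.1.1, p.2.1⟩⟩
        invFun := fun s => ⟨(s.2.1, s.1.1), s.2.2, s.1.2⟩
        left_inv := fun p => rfl
        right_inv := fun s => rfl }
    rw [Nat.card_congr e2]
    calc Nat.card (Σ b : X, {a : V // D a (b : V)})
        = ∑ b : X, Nat.card {a : V // D a (b : V)} := by
          simp [Nat.card_eq_fintype_card, Fintype.card_sigma]
      _ = ∑ b : X, indeg D (b : V) := rfl
      _ = ∑ b ∈ X.toFinset, indeg D b := Finset.sum_set_coe _
  have hsub : ({u, v} : Finset V) ⊆ X.toFinset := by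
    intro x hx
    simp only [Finset.mem_insert, Finset.mem_singleton] at hx
    rcases hx with rfl | rfl
    · exact Set.mem_toFinset.mpr huX
    · exact Set.mem_toFinset.mpr hvX
  have card3 : ∑ b ∈ X.toFinset, indeg D b = k * (X.toFinset.card - 2) := by
    rw [← Finset.sum_sdiff hsub]
    have h2 : ∑ b ∈ ({u, v} : Finset V), indeg D b = 0 := by
      rw [Finset.sum_pair huv, hu, hv]
    have h3 : ∑ b ∈ X.toFinset \ {u, v}, indeg D b
        = ∑ _b ∈ X.toFinset \ {u, v}, k := by
      apply Finset.sum_congr rfl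
      intro x hx
      simp only [Finset.mem_sdiff, Finset.mem_insert, Finset.mem_singleton,
        Set.mem_toFinset] at hx
      obtain ⟨hxX, hxuv⟩ := hx
      push_neg at hxuv
      rcases hxX with hxR | hxuv'
      · exact h1 x hxR hxuv.1 hxuv.2
      · simp only [Set.mem_insert_iff, Set.mem_singleton_iff] at hxuv'
        rcases hxuv' with rfl | rfl
        · exact (hxuv.1 rfl).elim
        · exact (hxuv.2 rfl).elim
    rw [h2, h3, Finset.sum_const, smul_eq_mul, add_zero,
      Finset.card_sdiff_of_subset hsub, Finset.card_pair huv, Nat.mul_comm]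
  have hcardX : Nat.card (X : Set V) = X.toFinset.card := by
    rw [Nat.card_coe_set_eq, Set.ncard_eq_toFinset_card']
  have h3le : 3 ≤ X.toFinset.card := by
    have hsub3 : ({u, v, w} : Finset V) ⊆ X.toFinset := by
      intro x hx
      simp only [Finset.mem_insert, Finset.mem_singleton] at hx
      rcases hx with rfl | rfl | rfl
      · exact Set.mem_toFinset.mpr huX
      · exact Set.mem_toFinset.mpr hvX
      · exact Set.mem_toFinset.mpr hwX
    have hc : ({u, v, w} : Finset V).card = 3 := by
      rw [Finset.card_insert_of_notMem (by simp [huv, Ne.symm hwu]),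
        Finset.card_pair (Ne.symm hwv)]
    exact hc ▸ Finset.card_le_card hsub3
  have hIC : indCount G X = k * (X.toFinset.card - 2) :=
    (card1.trans card2).trans card3
  have main2 : (indCount G X : ℤ) = k * Nat.card (X : Set V) - 2 * k := by
    rw [hIC, hcardX]
    have h2le : 2 ≤ X.toFinset.card := by omega
    rw [Nat.cast_mul, Nat.cast_sub h2le]
    push_cast
    ring
  refine ⟨h1, main2, ?_⟩
  -- part 3: G + uv is not (k, 2k)-sparse
  intro hs
  have hb := hs X (by rw [hcardX]; exact h3le)
  have hset : {e : Sym2 V | e ∈ (G ⊔ SimpleGraph.fromEdgeSet {s(u, v)}).edgeSet ∧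
        ∀ x ∈ e, x ∈ X}
      = insert s(u, v) {e : Sym2 V | e ∈ G.edgeSet ∧ ∀ x ∈ e, x ∈ X} := by
    ext e
    simp only [SimpleGraph.edgeSet_sup, SimpleGraph.edgeSet_fromEdgeSet,
      Set.mem_union, Set.mem_diff, Set.mem_singleton_iff, Set.mem_insert_iff,
      Set.mem_setOf_eq]
    constructor
    · rintro ⟨he | ⟨rfl, -⟩, hX'⟩
      · exact Or.inr ⟨he, hX'⟩
      · exact Or.inl rfl
    · rintro (rfl | ⟨he, hX'⟩)
      · refine ⟨Or.inr ⟨rfl, by simp [huv]⟩, ?_⟩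
        intro x hx
        rcases Sym2.mem_iff.mp hx with rfl | rfl
        · exact huX
        · exact hvX
      · exact ⟨Or.inl he, hX'⟩
  have hnotmem : s(u, v) ∉ {e : Sym2 V | e ∈ G.edgeSet ∧ ∀ x ∈ e, x ∈ X} := by
    intro h
    exact hadj (G.mem_edgeSet.mp h.1)
  have hcount : indCount (G ⊔ SimpleGraph.fromEdgeSet {s(u, v)}) X = indCount G X + 1 := by
    have e1 : indCount (G ⊔ SimpleGraph.fromEdgeSet {s(u, v)}) X
        = ({e : Sym2 V | e ∈ (G ⊔ SimpleGraph.fromEdgeSet {s(u, v)}).edgeSet ∧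
            ∀ x ∈ e, x ∈ X}).ncard := Nat.card_coe_set_eq _
    have e1' : indCount G X
        = ({e : Sym2 V | e ∈ G.edgeSet ∧ ∀ x ∈ e, x ∈ X}).ncard :=
      Nat.card_coe_set_eq _
    rw [e1, e1', hset, Set.ncard_insert_of_notMem hnotmem (Set.toFinite _)]
  rw [hcount] at hb
  push_cast at hb
  rw [main2] at hb
  linarith
end

section
/- Let k be a positive integer and let G=(V,E) be a simple (k,2k)-sparse graph on at least three nodes. Then for any two distinct nonadjacent nodes u,v ∈ V, the graph G admits an orientation D in which the indegree of every node is at most k and the indegrees of u and v are both zero. -/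
theorem stmt3 {V : Type*} [Fintype V] (k : ℕ) (hk : 0 < k)
    (G : SimpleGraph V) (hV : 3 ≤ Fintype.card V) (hG : IsK2KSparse k G)
    (u v : V) (huv : u ≠ v) (hadj : ¬ G.Adj u v) :
    -- there is an orientation `D` of `G` with all indegrees at most `k` in
    -- which the indegrees of `u` and `v` are both zero:
    ∃ D : V → V → Prop,
      (∀ x y, D x y → G.Adj x y) ∧
      (∀ x y, G.Adj x y → D x y ∨ D y x) ∧
      (∀ x y, D x y → ¬ D y x) ∧
      (∀ w, indeg D w ≤ k) ∧
      indeg D u = 0 ∧ indeg D v = 0 := by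
  classical
  set t : G.edgeSet → Finset (V × Fin k) := fun e =>
    (Finset.univ.filter fun x : V => x ∈ (e : Sym2 V) ∧ x ≠ u ∧ x ≠ v) ×ˢ Finset.univ with ht
  have hall : ∀ s : Finset G.edgeSet, s.card ≤ (s.biUnion t).card := by
    intro s
    set Y : Finset V := s.biUnion (fun e => Finset.univ.filter (· ∈ (e : Sym2 V))) with hY
    set XF : Finset V := Y.filter (fun x => x ≠ u ∧ x ≠ v) with hXF
    have hbi : s.biUnion t = XF ×ˢ (Finset.univ : Finset (Fin k)) := by
      ext ⟨x, j⟩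
      simp [ht, hXF, hY, Finset.mem_biUnion]
      tauto
    rw [hbi, Finset.card_product, Finset.card_univ, Fintype.card_fin]
    -- s.card ≤ indCount G ↑Y
    have hmemY : ∀ e ∈ s, ∀ x ∈ (e : Sym2 V), x ∈ Y := by
      intro e he x hx
      exact Finset.mem_biUnion.mpr ⟨e, he, Finset.mem_filter.mpr ⟨Finset.mem_univ _, hx⟩⟩
    have hcard1 : s.card ≤ indCount G (↑Y : Set V) := by
      have : Function.Injective (fun e : ↥s =>
          (⟨((e : G.edgeSet) : Sym2 V), (e : G.edgeSet).2,
            fun x hx => hmemY (e : G.edgeSet) e.2 x hx⟩ :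
            {e : Sym2 V // e ∈ G.edgeSet ∧ ∀ x ∈ e, x ∈ (↑Y : Set V)})) := by
        intro a b hab
        have h2 : ((a : G.edgeSet) : Sym2 V) = ((b : G.edgeSet) : Sym2 V) := by
          simpa [Subtype.ext_iff] using hab
        exact Subtype.ext (Subtype.ext h2)
      calc s.card = Nat.card ↥s := by
            rw [Nat.card_eq_fintype_card, Fintype.card_coe]
        _ ≤ _ := Nat.card_le_card_of_injective _ this
    have hYX : Y.card ≤ XF.card + 2 := by
      have hsub : Y ⊆ XF ∪ {u, v} := by
        intro x hx
        by_cases hxu : x = u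
        · subst hxu; simp
        by_cases hxv : x = v
        · subst hxv; simp
        exact Finset.mem_union_left _ (Finset.mem_filter.mpr ⟨hx, hxu, hxv⟩)
      have h1 := Finset.card_le_card hsub
      have h2 := Finset.card_union_le XF ({u, v} : Finset V)
      have h3 : ({u, v} : Finset V).card ≤ 2 :=
        (Finset.card_insert_le _ _).trans (by simp)
      omega
    rcases le_or_gt 3 Y.card with h3 | h3
    · -- sparse case
      have hnc : Nat.card (↑Y : Set V) = Y.card := by
        rw [Nat.card_coe_set_eq, Set.ncard_coe_finset]
      have hs := hG (↑Y : Set V) (by rw [hnc]; exact h3)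
      rw [hnc] at hs
      have : (s.card : ℤ) ≤ (XF.card : ℤ) * k := by
        have h1 : (s.card : ℤ) ≤ (indCount G (↑Y : Set V) : ℤ) := by exact_mod_cast hcard1
        have h2 : (Y.card : ℤ) ≤ (XF.card : ℤ) + 2 := by exact_mod_cast hYX
        nlinarith
      exact_mod_cast this
    · -- small case
      rcases s.eq_empty_or_nonempty with rfl | ⟨e, he⟩
      · simp
      obtain ⟨⟨a, b⟩, hab⟩ := Quot.exists_rep (e : Sym2 V)
      have hab' : (e : Sym2 V) = s(a, b) := hab.symm
      have hAdj : G.Adj a b := G.mem_edgeSet.mp (hab' ▸ e.2)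
      have hane : a ≠ b := G.ne_of_adj hAdj
      have haY : a ∈ Y := hmemY e he a (by rw [hab']; exact Sym2.mem_mk_left a b)
      have hbY : b ∈ Y := hmemY e he b (by rw [hab']; exact Sym2.mem_mk_right a b)
      have hYeq : Y = {a, b} := by
        apply (Finset.eq_of_subset_of_card_le _ _).symm
        · intro x hx
          simp at hx
          rcases hx with rfl | rfl
          · exact haY
          · exact hbY
        · rw [Finset.card_insert_of_notMem (by simpa using hane), Finset.card_singleton]
          omega
      have hs1 : s.card ≤ 1 := by
        apply Finset.card_le_one.mpr
        intro e1 h1 e2 h2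
        have key : ∀ e' : G.edgeSet, e' ∈ s → (e' : Sym2 V) = s(a, b) := by
          intro e' he'
          obtain ⟨⟨c, d⟩, hcd⟩ := Quot.exists_rep (e' : Sym2 V)
          have hcd' : (e' : Sym2 V) = s(c, d) := hcd.symm
          have hAdj' : G.Adj c d := G.mem_edgeSet.mp (hcd' ▸ e'.2)
          have hcne : c ≠ d := G.ne_of_adj hAdj'
          have hcY : c ∈ Y := hmemY e' he' c (by rw [hcd']; exact Sym2.mem_mk_left c d)
          have hdY : d ∈ Y := hmemY e' he' d (by rw [hcd']; exact Sym2.mem_mk_right c d)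
          rw [hYeq] at hcY hdY
          simp at hcY hdY
          rw [hcd']
          rcases hcY with rfl | rfl <;> rcases hdY with rfl | rfl
          · exact absurd rfl hcne
          · rfl
          · exact Sym2.eq_swap
          · exact absurd rfl hcne
        ext1
        rw [key e1 h1, key e2 h2]
      have hXF1 : 1 ≤ XF.card := by
        have : a ∉ ({u, v} : Set V) ∨ b ∉ ({u, v} : Set V) := by
          by_contra h
          push_neg at h
          obtain ⟨ha, hb⟩ := h
          simp at ha hb
          rcases ha with rfl | rfl <;> rcases hb with rfl | rfl
          · exact hane rfl
          · exact hadj hAdj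
          · exact hadj hAdj.symm
          · exact hane rfl
        apply Finset.card_pos.mpr
        rcases this with h | h
        · exact ⟨a, by simp [hXF]; simp at h; tauto⟩
        · exact ⟨b, by simp [hXF]; simp at h; tauto⟩
      calc s.card ≤ 1 := hs1
        _ ≤ XF.card * k := Nat.one_le_iff_ne_zero.mpr (by positivity)
  obtain ⟨f, hfinj, hft⟩ := (Finset.all_card_le_biUnion_card_iff_exists_injective t).mp hall
  have hmem : ∀ e : G.edgeSet, (f e).1 ∈ (e : Sym2 V) ∧ (f e).1 ≠ u ∧ (f e).1 ≠ v := by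
    intro e
    have := hft e
    rw [ht] at this
    simp only [Finset.mem_product, Finset.mem_filter, Finset.mem_univ, true_and] at this
    exact this.1
  have hedge : ∀ {x y : V}, G.Adj x y → s(x, y) ∈ G.edgeSet := fun h => G.mem_edgeSet.mpr h
  refine ⟨fun x y => ∃ h : G.Adj x y, (f ⟨s(x, y), hedge h⟩).1 = y, ?_, ?_, ?_, ?_, ?_, ?_⟩
  · exact fun x y h => h.choose
  · intro x y h
    have hm := (hmem ⟨s(x, y), hedge h⟩).1
    rw [Sym2.mem_iff] at hm
    rcases hm with hm | hm
    · right
      refine ⟨h.symm, ?_⟩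
      have heq : (⟨s(y, x), hedge h.symm⟩ : G.edgeSet) = ⟨s(x, y), hedge h⟩ :=
        Subtype.ext (Sym2.eq_swap)
      rw [heq]
      exact hm
    · exact Or.inl ⟨h, hm⟩
  · rintro x y ⟨h1, he1⟩ ⟨h2, he2⟩
    have heq : (⟨s(y, x), hedge h2⟩ : G.edgeSet) = ⟨s(x, y), hedge h1⟩ :=
      Subtype.ext (Sym2.eq_swap)
    rw [heq, he1] at he2
    exact G.ne_of_adj h1 he2.symm
  · intro w
    have hinj : Function.Injective
        (fun x : {x : V // ∃ h : G.Adj x w, (f ⟨s(x, w), hedge h⟩).1 = w} =>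
          (f ⟨s(x.1, w), hedge x.2.choose⟩).2) := by
      rintro ⟨a, ha⟩ ⟨b, hb⟩ hab
      simp only at hab
      have hfa : (f ⟨s(a, w), hedge ha.choose⟩).1 = w := ha.choose_spec
      have hfb : (f ⟨s(b, w), hedge hb.choose⟩).1 = w := hb.choose_spec
      have hfe : f ⟨s(a, w), hedge ha.choose⟩ = f ⟨s(b, w), hedge hb.choose⟩ :=
        Prod.ext (hfa.trans hfb.symm) hab
      have := hfinj hfe
      have hsym : s(a, w) = s(b, w) := congrArg Subtype.val this
      rw [Sym2.eq_iff] at hsym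
      rcases hsym with ⟨rfl, -⟩ | ⟨h1, h2⟩
      · rfl
      · exact Subtype.ext (h1.trans h2)
    calc indeg _ w ≤ Nat.card (Fin k) := Nat.card_le_card_of_injective _ hinj
      _ = k := by simp
  · have : IsEmpty {x : V // ∃ h : G.Adj x u, (f ⟨s(x, u), hedge h⟩).1 = u} := by
      refine ⟨fun x => ?_⟩
      obtain ⟨x, h, hfx⟩ := x
      exact (hmem ⟨s(x, u), hedge h⟩).2.1 hfx
    exact Nat.card_of_isEmpty
  · have : IsEmpty {x : V // ∃ h : G.Adj x v, (f ⟨s(x, v), hedge h⟩).1 = v} := by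
      refine ⟨fun x => ?_⟩
      obtain ⟨x, h, hfx⟩ := x
      exact (hmem ⟨s(x, v), hedge h⟩).2.2 hfx
    exact Nat.card_of_isEmpty
end

section
/- Let k and ℓ be integers with k < ℓ < 2k, and let G=(V,E) be a (k,ℓ)-sparse multigraph. If X and Y are (k,ℓ)-blocks of G with |X ∩ Y| ≥ 2, then X ∪ Y is a (k,ℓ)-block of G. Consequently, any two distinct (k,ℓ)-components of G intersect in at most one node. -/
/-- A multigraph on node set `V` is given by an edge index type `E` together
with an endpoint map `ends : E → Sym2 V`.  `mIndCount ends X` is the number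
of edges with both endpoints in `X`. -/
noncomputable def mIndCount {V E : Type*} (ends : E → Sym2 V) (X : Set V) : ℕ :=
  Nat.card {e : E // ∀ x ∈ ends e, x ∈ X}

/-- The multigraph is `(k, ℓ)`-sparse: every `X ⊆ V` induces at most
`max {k|X| - ℓ, 0}` edges. -/
def IsKLSparse {V E : Type*} (k ℓ : ℕ) (ends : E → Sym2 V) : Prop :=
  ∀ X : Set V, (mIndCount ends X : ℤ) ≤ max ((k : ℤ) * Nat.card X - ℓ) 0

/-- A `(k, ℓ)`-block: a nonempty node set inducing a `(k, ℓ)`-tight subgraph. -/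
def IsKLBlock {V E : Type*} (k ℓ : ℕ) (ends : E → Sym2 V) (X : Set V) : Prop :=
  X.Nonempty ∧ (mIndCount ends X : ℤ) = max ((k : ℤ) * Nat.card X - ℓ) 0

/-- A `(k, ℓ)`-component: an inclusion-wise maximal `(k, ℓ)`-block. -/
def IsKLComponent {V E : Type*} (k ℓ : ℕ) (ends : E → Sym2 V) (X : Set V) : Prop :=
  IsKLBlock k ℓ ends X ∧ ∀ Y : Set V, IsKLBlock k ℓ ends Y → X ⊆ Y → X = Y

lemma mIndCount_eq_filter {V E : Type*} [Fintype E] (ends : E → Sym2 V) (X : Set V)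
    [DecidablePred fun e => ∀ x ∈ ends e, x ∈ X] :
    mIndCount ends X = (Finset.univ.filter (fun e => ∀ x ∈ ends e, x ∈ X)).card := by
  rw [mIndCount, Nat.card_eq_fintype_card, Fintype.card_subtype]

lemma mIndCount_submod {V E : Type*} [Fintype E] (ends : E → Sym2 V) (X Y : Set V) :
    mIndCount ends X + mIndCount ends Y ≤
      mIndCount ends (X ∪ Y) + mIndCount ends (X ∩ Y) := by
  classical
  simp only [mIndCount_eq_filter]
  set A := Finset.univ.filter (fun e => ∀ x ∈ ends e, x ∈ X) with hA
  set B := Finset.univ.filter (fun e => ∀ x ∈ ends e, x ∈ Y) with hB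
  have h := Finset.card_union_add_card_inter A B
  rw [← h]
  apply Nat.add_le_add
  · apply Finset.card_le_card
    intro e he
    simp only [hA, hB, Finset.mem_union, Finset.mem_filter, Finset.mem_univ, true_and] at he ⊢
    rcases he with h | h
    · exact fun x hx => Or.inl (h x hx)
    · exact fun x hx => Or.inr (h x hx)
  · apply Finset.card_le_card
    intro e he
    simp only [hA, hB, Finset.mem_inter, Finset.mem_filter, Finset.mem_univ, true_and] at he ⊢
    exact fun x hx => ⟨he.1 x hx, he.2 x hx⟩

theorem stmt8 {V E : Type*} [Fintype V] [Fintype E]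
    (k ℓ : ℕ) (hkℓ : k < ℓ) (hℓ : ℓ < 2 * k)
    (ends : E → Sym2 V) (hsparse : IsKLSparse k ℓ ends) :
    (∀ X Y : Set V, IsKLBlock k ℓ ends X → IsKLBlock k ℓ ends Y →
        2 ≤ Nat.card (X ∩ Y : Set V) → IsKLBlock k ℓ ends (X ∪ Y)) ∧
      ∀ X Y : Set V, IsKLComponent k ℓ ends X → IsKLComponent k ℓ ends Y →
        X ≠ Y → Nat.card (X ∩ Y : Set V) ≤ 1 := by
  have main : ∀ X Y : Set V, IsKLBlock k ℓ ends X → IsKLBlock k ℓ ends Y →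
      2 ≤ Nat.card (X ∩ Y : Set V) → IsKLBlock k ℓ ends (X ∪ Y) := by
    intro X Y hX hY hint
    -- cardinalities
    have hXc : 2 ≤ Nat.card (X : Set V) := by
      calc 2 ≤ Nat.card (X ∩ Y : Set V) := hint
        _ ≤ Nat.card (X : Set V) := by
          simp only [Nat.card_coe_set_eq]
          exact Set.ncard_le_ncard Set.inter_subset_left X.toFinite
    have hYc : 2 ≤ Nat.card (Y : Set V) := by
      calc 2 ≤ Nat.card (X ∩ Y : Set V) := hint
        _ ≤ Nat.card (Y : Set V) := by
          simp only [Nat.card_coe_set_eq]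
          exact Set.ncard_le_ncard Set.inter_subset_right Y.toFinite
    have hUc : 2 ≤ Nat.card (X ∪ Y : Set V) := by
      calc 2 ≤ Nat.card (X : Set V) := hXc
        _ ≤ Nat.card (X ∪ Y : Set V) := by
          simp only [Nat.card_coe_set_eq]
          exact Set.ncard_le_ncard Set.subset_union_left (X ∪ Y).toFinite
    have hpos : ∀ Z : Set V, 2 ≤ Nat.card (Z : Set V) →
        max ((k : ℤ) * Nat.card Z - ℓ) 0 = (k : ℤ) * Nat.card Z - ℓ := by
      intro Z hZ
      have : (ℓ : ℤ) < 2 * k := by exact_mod_cast hℓ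
      have h2 : (2 : ℤ) ≤ (Nat.card (Z : Set V) : ℤ) := by exact_mod_cast hZ
      have : (ℓ : ℤ) ≤ (k : ℤ) * Nat.card Z := by nlinarith
      omega
    -- card identity
    have hcard : Nat.card (X ∪ Y : Set V) + Nat.card (X ∩ Y : Set V)
        = Nat.card (X : Set V) + Nat.card (Y : Set V) := by
      simp only [Nat.card_coe_set_eq]
      exact Set.ncard_union_add_ncard_inter X Y X.toFinite Y.toFinite
    have hsub := mIndCount_submod ends X Y
    have hsub' : (mIndCount ends X : ℤ) + mIndCount ends Y ≤
        (mIndCount ends (X ∪ Y) : ℤ) + mIndCount ends (X ∩ Y) := by exact_mod_cast hsub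
    have hXeq : (mIndCount ends X : ℤ) = (k : ℤ) * Nat.card (X : Set V) - ℓ := by
      rw [hX.2, hpos X hXc]
    have hYeq : (mIndCount ends Y : ℤ) = (k : ℤ) * Nat.card (Y : Set V) - ℓ := by
      rw [hY.2, hpos Y hYc]
    have hIle : (mIndCount ends (X ∩ Y) : ℤ) ≤ (k : ℤ) * Nat.card (X ∩ Y : Set V) - ℓ := by
      have := hsparse (X ∩ Y)
      rwa [hpos _ hint] at this
    have hUle := hsparse (X ∪ Y)
    rw [hpos _ hUc] at hUle
    have hcard' : (Nat.card (X ∪ Y : Set V) : ℤ) + Nat.card (X ∩ Y : Set V)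
        = (Nat.card (X : Set V) : ℤ) + Nat.card (Y : Set V) := by exact_mod_cast hcard
    refine ⟨Set.Nonempty.inl hX.1, ?_⟩
    rw [hpos _ hUc]
    nlinarith [hsub', hXeq, hYeq, hIle, hUle, hcard']
  refine ⟨main, ?_⟩
  intro X Y hX hY hne
  by_contra h
  push_neg at h
  have h2 : 2 ≤ Nat.card (X ∩ Y : Set V) := h
  have hU := main X Y hX.1 hY.1 h2
  have hXU : X = X ∪ Y := hX.2 _ hU Set.subset_union_left
  have hYU : Y = X ∪ Y := hY.2 _ hU Set.subset_union_right
  exact hne (hXU.trans hYU.symm)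
end
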